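/- Let A and B be real symmetric positive definite n×n matrices. If sin φ(B) ≤ cos φ(A), i.e. (μₙ−μ₁)/(μₙ+μ₁) ≤ 2√(λ₁λₙ)/(λ₁+λₙ) where λ's and μ's are the extreme eigenvalues of A and B respectively, then the product BA is real positive in the sense that ⟨BAx, x⟩ ≥ 0 for all x ∈ ℝⁿ. -/

import Mathlib

open scoped Matrix.Norms.L2Operator RealInnerProductSpace

noncomputable def rq {n : ℕ} (A : Matrix (Fin n) (Fin n) ℝ)
    (x : EuclideanSpace ℝ (Fin n)) : ℝ :=
  ⟪Matrix.toEuclideanLin A x, x⟫ / (‖Matrix.toEuclideanLin A x‖ * ‖x‖)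

def IsEigenvalue {n : ℕ} (A : Matrix (Fin n) (Fin n) ℝ) (μ : ℝ) : Prop :=
  ∃ x : EuclideanSpace ℝ (Fin n), x ≠ 0 ∧ Matrix.toEuclideanLin A x = μ • x

/-!
Put `m = (μ₁ + μₙ) / 2` and `r = (μₙ - μ₁) / 2`. As the spectrum of `B` lies in `[m - r, m + r]`,
`‖(B - m) y‖ ≤ r ‖y‖`, so with `y = A x`
`⟪B A x, x⟫ ≥ m ⟪A x, x⟫ - r ‖A x‖ ‖x‖`.
Kantorovich's inequality `⟪A x, x⟫ ≥ cos φ(A) ‖A x‖ ‖x‖` and `r / m = sin φ(B) ≤ cos φ(A)` make the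
right-hand side nonnegative. Both spectral estimates come from the positivity of `(T - a)(c - T)`
for a symmetric `T` with spectrum in `[a, c]`.
-/

open Module.End

theorem real_inner_sub_smul_smul_sub {E : Type*} [NormedAddCommGroup E] [InnerProductSpace ℝ E]
    (u x : E) (a c : ℝ) :
    ⟪u - a • x, c • x - u⟫ = (a + c) * ⟪u, x⟫ - ‖u‖ ^ 2 - a * c * ‖x‖ ^ 2 := by
  simp only [inner_sub_left, inner_sub_right, real_inner_smul_left, real_inner_smul_right,
    real_inner_self_eq_norm_sq, real_inner_comm u x]
  ring

namespace LinearMap.IsSymmetric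

variable {E : Type*} [NormedAddCommGroup E] [InnerProductSpace ℝ E] [FiniteDimensional ℝ E]
  {T : E →ₗ[ℝ] E} {a c : ℝ}

theorem inner_sub_smul_smul_sub_nonneg (hT : T.IsSymmetric)
    (hspec : ∀ μ, HasEigenvalue T μ → a ≤ μ ∧ μ ≤ c) (x : E) :
    0 ≤ ⟪T x - a • x, c • x - T x⟫ := by
  set b := hT.eigenvectorBasis rfl
  set ev := hT.eigenvalues rfl
  have hcoord (s : ℝ) (i) : ⟪b i, T x - s • x⟫ = (ev i - s) * ⟪b i, x⟫ := by
    rw [inner_sub_right, ← hT, hT.apply_eigenvectorBasis, real_inner_smul_left,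
      real_inner_smul_right]
    simp only [RCLike.ofReal_real_eq_id, id_eq]
    ring
  rw [← b.sum_inner_mul_inner]
  refine Finset.sum_nonneg fun i _ => ?_
  obtain ⟨hai, hic⟩ : a ≤ ev i ∧ ev i ≤ c := hspec _ (hT.hasEigenvalue_eigenvalues rfl i)
  rw [← neg_sub (T x), inner_neg_right, real_inner_comm (b i), hcoord, hcoord]
  convert mul_nonneg (mul_nonneg (sub_nonneg.2 hai) (sub_nonneg.2 hic)) (sq_nonneg ⟪b i, x⟫) using 1
  ring

theorem kantorovich (hT : T.IsSymmetric) (hspec : ∀ μ, HasEigenvalue T μ → a ≤ μ ∧ μ ≤ c)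
    (hac : 0 ≤ a * c) (x : E) :
    2 * √(a * c) * (‖T x‖ * ‖x‖) ≤ (a + c) * ⟪T x, x⟫ := by
  have h := hT.inner_sub_smul_smul_sub_nonneg hspec x
  rw [real_inner_sub_smul_smul_sub] at h
  have hamgm := two_mul_le_add_sq ‖T x‖ (√(a * c) * ‖x‖)
  rw [mul_pow, Real.sq_sqrt hac] at hamgm
  linarith

theorem norm_sub_midpoint_smul_le (hT : T.IsSymmetric)
    (hspec : ∀ μ, HasEigenvalue T μ → a ≤ μ ∧ μ ≤ c) (hac : a ≤ c) (x : E) :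
    ‖T x - ((a + c) / 2) • x‖ ≤ (c - a) / 2 * ‖x‖ := by
  have h := hT.inner_sub_smul_smul_sub_nonneg hspec x
  have hsq : ‖T x - ((a + c) / 2) • x‖ ^ 2 =
      ((c - a) / 2 * ‖x‖) ^ 2 - ⟪T x - a • x, c • x - T x⟫ := by
    rw [real_inner_sub_smul_smul_sub, ← real_inner_self_eq_norm_sq]
    simp only [inner_sub_left, inner_sub_right, real_inner_smul_left, real_inner_smul_right,
      real_inner_comm x (T x), real_inner_self_eq_norm_sq, norm_smul, mul_pow, Real.norm_eq_abs,
      sq_abs]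
    ring
  have hr : 0 ≤ (c - a) / 2 * ‖x‖ := mul_nonneg (by linarith) (norm_nonneg x)
  exact (sq_le_sq₀ (norm_nonneg _) hr).1 (by linarith)

theorem inner_map_nonneg_of_mul_norm_le_inner (hT : T.IsSymmetric)
    (hspec : ∀ μ, HasEigenvalue T μ → a ≤ μ ∧ μ ≤ c) (ha : 0 < a) (hac : a ≤ c) {κ : ℝ}
    (hκ : (c - a) / (c + a) ≤ κ) {y x : E} (hyx : κ * (‖y‖ * ‖x‖) ≤ ⟪y, x⟫) :
    0 ≤ ⟪T y, x⟫ := by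
  set m := (a + c) / 2 with hm
  have hdev := hT.norm_sub_midpoint_smul_le hspec hac y
  have hrad : (c - a) / 2 ≤ m * κ := by
    rw [div_le_iff₀ (by linarith)] at hκ
    rw [hm]
    linarith
  calc 0 ≤ m * (⟪y, x⟫ - κ * (‖y‖ * ‖x‖)) := mul_nonneg (by linarith) (sub_nonneg.2 hyx)
    _ ≤ m * ⟪y, x⟫ - (c - a) / 2 * ‖y‖ * ‖x‖ := by
      linarith [mul_le_mul_of_nonneg_right hrad (by positivity : 0 ≤ ‖y‖ * ‖x‖)]
    _ ≤ m * ⟪y, x⟫ - ‖T y - m • y‖ * ‖x‖ := by gcongr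
    _ ≤ m * ⟪y, x⟫ + ⟪T y - m • y, x⟫ := by
      linarith [neg_le_of_abs_le (abs_real_inner_le_norm (T y - m • y) x)]
    _ = ⟪T y, x⟫ := by rw [inner_sub_left, real_inner_smul_left]; ring

end LinearMap.IsSymmetric

theorem hasEigenvalue_toEuclideanLin_iff {n : ℕ} {A : Matrix (Fin n) (Fin n) ℝ} {μ : ℝ} :
    HasEigenvalue (Matrix.toEuclideanLin A) μ ↔ IsEigenvalue A μ := by
  constructor
  · intro h
    obtain ⟨x, hx, hx0⟩ := h.exists_hasEigenvector
    exact ⟨x, hx0, mem_eigenspace_iff.1 hx⟩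
  · rintro ⟨x, hx0, hx⟩
    exact hasEigenvalue_of_hasEigenvector ⟨mem_eigenspace_iff.2 hx, hx0⟩

theorem IsEigenvalue.pos {n : ℕ} {A : Matrix (Fin n) (Fin n) ℝ} {μ : ℝ} (hA : A.PosDef)
    (h : IsEigenvalue A μ) : 0 < μ := by
  obtain ⟨x, hx0, hx⟩ := h
  have hpos : 0 < ⟪x, Matrix.toEuclideanLin A x⟫ := by
    simpa [EuclideanSpace.inner_eq_star_dotProduct, Matrix.ofLp_toLpLin, dotProduct_comm]
      using hA.dotProduct_mulVec_pos (x := WithLp.ofLp x) (by simpa using hx0)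
  rw [hx, real_inner_smul_right, real_inner_self_eq_norm_sq] at hpos
  exact pos_of_mul_pos_left hpos (by positivity)

theorem positivity_of_product_general {n : ℕ} (A B : Matrix (Fin n) (Fin n) ℝ)
    (hAPD : A.PosDef) (hBPD : B.PosDef)
    (lam1 lamn mu1 mun : ℝ)
    (hA1 : IsEigenvalue A lam1)
    (hAbound : ∀ μ, IsEigenvalue A μ → lam1 ≤ μ ∧ μ ≤ lamn)
    (hB1 : IsEigenvalue B mu1)
    (hBbound : ∀ μ, IsEigenvalue B μ → mu1 ≤ μ ∧ μ ≤ mun)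
    (hcond : (mun - mu1) / (mun + mu1) ≤ 2 * Real.sqrt (lam1 * lamn) / (lam1 + lamn)) :
    ∀ x : EuclideanSpace ℝ (Fin n), 0 ≤ ⟪Matrix.toEuclideanLin (B * A) x, x⟫ := by
  intro x
  have hA := Matrix.isSymmetric_toEuclideanLin_iff.2 hAPD.1
  have hB := Matrix.isSymmetric_toEuclideanLin_iff.2 hBPD.1
  have hAspec := fun μ hμ => hAbound μ (hasEigenvalue_toEuclideanLin_iff.1 hμ)
  have hBspec := fun μ hμ => hBbound μ (hasEigenvalue_toEuclideanLin_iff.1 hμ)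
  have hlam1 : 0 < lam1 := hA1.pos hAPD
  have hlam : lam1 ≤ lamn := (hAbound lam1 hA1).2
  have hcos : 2 * √(lam1 * lamn) / (lam1 + lamn) *
      (‖Matrix.toEuclideanLin A x‖ * ‖x‖) ≤ ⟪Matrix.toEuclideanLin A x, x⟫ := by
    rw [div_mul_eq_mul_div, div_le_iff₀ (by linarith), mul_comm _ (lam1 + lamn)]
    exact hA.kantorovich hAspec (mul_pos hlam1 (hlam1.trans_le hlam)).le x
  rw [Matrix.toLpLin_mul_same, LinearMap.comp_apply]
  exact hB.inner_map_nonneg_of_mul_norm_le_inner hBspec (hB1.pos hBPD) (hBbound mu1 hB1).2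
    hcond hcos

theorem positivity_of_product {n : ℕ} (A B : Matrix (Fin n) (Fin n) ℝ)
    (hASymm : A.IsSymm) (hAPD : A.PosDef) (hBSymm : B.IsSymm) (hBPD : B.PosDef)
    (lam1 lamn mu1 mun : ℝ)
    (hA1 : IsEigenvalue A lam1) (hAn : IsEigenvalue A lamn)
    (hAbound : ∀ μ, IsEigenvalue A μ → lam1 ≤ μ ∧ μ ≤ lamn)
    (hB1 : IsEigenvalue B mu1) (hBn : IsEigenvalue B mun)
    (hBbound : ∀ μ, IsEigenvalue B μ → mu1 ≤ μ ∧ μ ≤ mun)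
    (hcond : (mun - mu1) / (mun + mu1) ≤ 2 * Real.sqrt (lam1 * lamn) / (lam1 + lamn)) :
    ∀ x : EuclideanSpace ℝ (Fin n), 0 ≤ ⟪Matrix.toEuclideanLin (B * A) x, x⟫ :=
  positivity_of_product_general A B hAPD hBPD lam1 lamn mu1 mun hA1 hAbound hB1 hBbound hcond
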